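/- arXiv:1705.01527 — 11 statements merged into one kernel-verified Lean document; each statement's English description precedes it below -/
import Mathlib

section
/- Fix indices i, j with m_i + m_j ≤ d, and fix v ∈ ℂ^n. Then for every ζ ∈ ℂ with |ζ| = 1, P_{z_i w_j}(h^v(ζ), \overline{h^v(ζ)}) = (1 − ζ)^{d − m_i − m_j} · P_{z_i w_j}(v, (−ζ^{−1})^M \overline{v}). -/
/-!
With the weight `M` on both the `z`- and the `w`-variables, `P` is weighted homogeneous of degree
`d`, so `P_{z_i w_j}` is weighted homogeneous of degree `d - m_i - m_j`. On the unit circle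
`conj ζ = ζ⁻¹`, hence `1 - conj ζ = (1 - ζ) · (-ζ⁻¹)`: the point `(h^v(ζ), conj h^v(ζ))` is the
point `(v, (-ζ⁻¹)^M conj v)` rescaled by `1 - ζ` with weights `M`, and weighted homogeneity pulls
out the factor `(1 - ζ)^(d - m_i - m_j)`.
-/

open MvPolynomial ComplexConjugate

theorem MvPolynomial.IsWeightedHomogeneous.eval_pow_weight_mul {R σ : Type*} [CommSemiring R]
    {w : σ → ℕ} {φ : MvPolynomial σ R} {e : ℕ} (hφ : φ.IsWeightedHomogeneous w e)
    (c : R) (x : σ → R) :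
    eval (fun s => c ^ w s * x s) φ = c ^ e * eval x φ := by
  induction hφ using IsWeightedHomogeneous.induction_on with
  | zero => simp
  | add p q _ _ hp hq => rw [map_add, map_add, hp, hq, mul_add]
  | monomial d r hd =>
    simp_rw [eval_monomial, mul_pow, ← pow_mul, Finsupp.prod_mul, ← hd, Finsupp.weight_apply,
      Finsupp.prod, Finsupp.sum, Finset.prod_pow_eq_pow_sum, smul_eq_mul, mul_comm (w _)]
    ring

theorem one_sub_inv_eq_mul_neg_inv {K : Type*} [Field K] {z : K} (hz : z ≠ 0) :
    1 - z⁻¹ = (1 - z) * -z⁻¹ := by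
  field_simp
  ring

theorem stmt0_general (n : ℕ) (m : Fin n → ℕ)
    (d k0 : ℕ)
    (P : MvPolynomial (Fin n ⊕ Fin n) ℂ)
    (hP : ∀ J ∈ P.support,
      ((∑ i, m i * J (Sum.inl i)) + (∑ i, m i * J (Sum.inr i)) = d ∧
        d - k0 ≤ ∑ i, m i * J (Sum.inr i) ∧ (∑ i, m i * J (Sum.inr i)) ≤ k0))
    (i j : Fin n) (hij : m i + m j ≤ d) (v : Fin n → ℂ)
    (ζ : ℂ) (hζ : ‖ζ‖ = 1) :
    eval (Sum.elim (fun l => (1 - ζ) ^ m l * v l)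
        (fun l => (1 - conj ζ) ^ m l * conj (v l)))
        (pderiv (Sum.inl i) (pderiv (Sum.inr j) P)) =
      (1 - ζ) ^ (d - m i - m j) *
        eval (Sum.elim v (fun l => (-ζ⁻¹) ^ m l * conj (v l)))
          (pderiv (Sum.inl i) (pderiv (Sum.inr j) P)) := by
  have hPd : P.IsWeightedHomogeneous (Sum.elim m m) d := fun J hJ => by
    rw [Finsupp.weight_eq_sum, Fintype.sum_sum_type, ← (hP J (mem_support_iff.mpr hJ)).1]
    simp only [Sum.elim_inl, Sum.elim_inr, smul_eq_mul, mul_comm]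
  have hPij : (pderiv (Sum.inl i) (pderiv (Sum.inr j) P)).IsWeightedHomogeneous
      (Sum.elim m m) (d - m i - m j) :=
    (hPd.pderiv (n' := d - m j) (Nat.sub_add_cancel (by omega))).pderiv
      (by simp only [Sum.elim_inl]; omega)
  have hconj : 1 - conj ζ = (1 - ζ) * -ζ⁻¹ := by
    rw [← Complex.inv_eq_conj hζ, one_sub_inv_eq_mul_neg_inv (norm_ne_zero_iff.mp (by simp [hζ]))]
  convert hPij.eval_pow_weight_mul (1 - ζ) _ using 3
  ext (l | l)
  · rfl
  · simp only [Sum.elim_inr, hconj, mul_pow, mul_assoc]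

/-- For indices `i, j` with `m i + m j ≤ d` and `v ∈ ℂⁿ`, for every `ζ` on the
unit circle, `P_{z_i w_j}(h^v(ζ), conj (h^v(ζ))) = (1-ζ)^(d - m_i - m_j) ·
P_{z_i w_j}(v, (-ζ⁻¹)^M conj v)`. -/
theorem stmt0 (n : ℕ) (hn : 1 ≤ n) (m : Fin n → ℕ) (hm : ∀ i, 0 < m i)
    (d k0 : ℕ) (hdk0 : d ≤ 2 * k0) (hk0d : k0 < d)
    (P : MvPolynomial (Fin n ⊕ Fin n) ℂ)
    (hP : ∀ J ∈ P.support,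
      ((∑ i, m i * J (Sum.inl i)) + (∑ i, m i * J (Sum.inr i)) = d ∧
        d - k0 ≤ ∑ i, m i * J (Sum.inr i) ∧ (∑ i, m i * J (Sum.inr i)) ≤ k0))
    (i j : Fin n) (hij : m i + m j ≤ d) (v : Fin n → ℂ)
    (ζ : ℂ) (hζ : ‖ζ‖ = 1) :
    eval (Sum.elim (fun l => (1 - ζ) ^ m l * v l)
        (fun l => (1 - conj ζ) ^ m l * conj (v l)))
        (pderiv (Sum.inl i) (pderiv (Sum.inr j) P)) =
      (1 - ζ) ^ (d - m i - m j) *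
        eval (Sum.elim v (fun l => (-ζ⁻¹) ^ m l * conj (v l)))
          (pderiv (Sum.inl i) (pderiv (Sum.inr j) P)) :=
  stmt0_general n m d k0 P hP i j hij v ζ hζ
end

section
/- Fix indices i, j with m_i + m_j ≤ d, and fix v ∈ ℂ^n. Then there exists a polynomial Q with complex coefficients in one variable, divisible by X^{m_j} and of degree at most 2k_0 − d + m_j, such that for every ζ ∈ ℂ with |ζ| = 1, ζ^{k_0} · P_{z_i w_j}(h^v(ζ), \overline{h^v(ζ)}) = (1 − ζ)^{d − m_i − m_j} · Q(ζ). -/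
open MvPolynomial ComplexConjugate

/-!
On the unit circle `conj ζ = ζ⁻¹`, so `1 - conj ζ = -(1 - ζ) ζ⁻¹`. Hence a monomial `z^J w^K`
evaluated at `(h^v(ζ), conj h^v(ζ))` equals `(-1)^{M·K} (1 - ζ)^{M·J + M·K} ζ^{-M·K}` times a
constant, and multiplying by `ζ^{k₀}` with `M·K ≤ k₀` leaves the monomial `ζ^{k₀ - M·K}`.
Every monomial of `P_{z_i w_j}` comes from a monomial of `P` with `z_i`- and `w_j`-degree raised
by one, so its weights are those of `P` lowered by `m_i` and `m_j`, which yields the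
divisibility by `X^{m_j}` and the degree bound.
-/

open Finsupp (weight)

theorem Finsupp.weight_sumElim_zero {ι : Type*} [Fintype ι] (m : ι → ℕ) (J : ι ⊕ ι →₀ ℕ) :
    weight (Sum.elim m 0) J = ∑ l, m l * J (Sum.inl l) := by
  simp [Finsupp.weight_eq_sum, Fintype.sum_sum_type, mul_comm]

theorem Finsupp.weight_zero_sumElim {ι : Type*} [Fintype ι] (m : ι → ℕ) (J : ι ⊕ ι →₀ ℕ) :
    weight (Sum.elim 0 m) J = ∑ l, m l * J (Sum.inr l) := by
  simp [Finsupp.weight_eq_sum, Fintype.sum_sum_type, mul_comm]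

namespace MvPolynomial

theorem add_single_mem_support_of_mem_support_pderiv {σ R : Type*} [CommSemiring R]
    {p : MvPolynomial σ R} {s : σ} {J : σ →₀ ℕ} (hJ : J ∈ (pderiv s p).support) :
    J + Finsupp.single s 1 ∈ p.support := by
  rw [mem_support_iff, coeff_pderiv] at hJ
  exact mem_support_iff.mpr (left_ne_zero_of_mul hJ)

theorem eval_sumElim_pow_mul_monomial {ι R : Type*} [Fintype ι] [CommSemiring R]
    (m : ι → ℕ) (a b : R) (x y : ι → R) (J : ι ⊕ ι →₀ ℕ) (c : R) :
    eval (Sum.elim (fun l => a ^ m l * x l) (fun l => b ^ m l * y l)) (monomial J c) =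
      a ^ weight (Sum.elim m 0) J * b ^ weight (Sum.elim 0 m) J *
        eval (Sum.elim x y) (monomial J c) := by
  simp only [eval_monomial, Finsupp.prod_pow, Fintype.prod_sum_type, Sum.elim_inl, Sum.elim_inr,
    Finsupp.weight_sumElim_zero, Finsupp.weight_zero_sumElim, mul_pow, ← pow_mul,
    Finset.prod_mul_distrib, Finset.prod_pow_eq_pow_sum]
  ring

end MvPolynomial

theorem Complex.pow_mul_one_sub_conj_pow {ζ : ℂ} (hζ : ‖ζ‖ = 1) {b k : ℕ} (hbk : b ≤ k) :
    ζ ^ k * (1 - conj ζ) ^ b = (-1) ^ b * (1 - ζ) ^ b * ζ ^ (k - b) := by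
  have hζ0 : ζ ≠ 0 := by rintro rfl; simp at hζ
  have hb : ζ * (1 - ζ⁻¹) = -1 * (1 - ζ) := by field_simp; ring
  rw [← Complex.inv_eq_conj hζ, ← Nat.sub_add_cancel hbk, Nat.add_sub_cancel, pow_add,
    ← mul_pow (-1), ← hb, mul_pow]
  ring

theorem MvPolynomial.exists_polynomial_pow_mul_eval_circle_eq {ι : Type*} [Fintype ι]
    (m : ι → ℕ) (v : ι → ℂ) (R : MvPolynomial (ι ⊕ ι) ℂ) (e a b k : ℕ)
    (hR : ∀ J ∈ R.support, weight (Sum.elim m 0) J + weight (Sum.elim 0 m) J = e ∧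
      a + weight (Sum.elim 0 m) J ≤ k ∧ k ≤ b + weight (Sum.elim 0 m) J) :
    ∃ Q : Polynomial ℂ, Polynomial.X ^ a ∣ Q ∧ Q.natDegree ≤ b ∧
      ∀ ζ : ℂ, ‖ζ‖ = 1 →
        ζ ^ k * eval (Sum.elim (fun l => (1 - ζ) ^ m l * v l)
            (fun l => (1 - conj ζ) ^ m l * conj (v l))) R =
          (1 - ζ) ^ e * Q.eval ζ := by
  refine ⟨∑ J ∈ R.support,
    Polynomial.C ((-1) ^ weight (Sum.elim 0 m) J *
        eval (Sum.elim v fun l => conj (v l)) (monomial J (coeff J R))) *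
      Polynomial.X ^ (k - weight (Sum.elim 0 m) J), ?_, ?_, ?_⟩
  · refine Finset.dvd_sum fun J hJ => Dvd.dvd.mul_left (pow_dvd_pow _ ?_) _
    have := (hR J hJ).2.1
    omega
  · refine Polynomial.natDegree_sum_le_of_forall_le _ _ fun J hJ => ?_
    have := (hR J hJ).2.2
    grw [Polynomial.natDegree_C_mul_X_pow_le]
    omega
  · intro ζ hζ
    conv_lhs => rw [R.as_sum]
    simp only [map_sum, Finset.mul_sum, Polynomial.eval_finsetSum, Polynomial.eval_mul,
      Polynomial.eval_C, Polynomial.eval_pow, Polynomial.eval_X]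
    refine Finset.sum_congr rfl fun J hJ => ?_
    obtain ⟨he, hk, -⟩ := hR J hJ
    rw [eval_sumElim_pow_mul_monomial, ← he, pow_add]
    calc _ = (1 - ζ) ^ weight (Sum.elim m 0) J * (ζ ^ k * (1 - conj ζ) ^ weight (Sum.elim 0 m) J) *
          eval (Sum.elim v fun l => conj (v l)) (monomial J (coeff J R)) := by ring
      _ = _ := by rw [Complex.pow_mul_one_sub_conj_pow hζ (by omega)]; ring

theorem stmt1_general (n : ℕ) (m : Fin n → ℕ)
    (d k0 : ℕ)
    (P : MvPolynomial (Fin n ⊕ Fin n) ℂ)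
    (hP : ∀ J ∈ P.support,
      ((∑ i, m i * J (Sum.inl i)) + (∑ i, m i * J (Sum.inr i)) = d ∧
        d - k0 ≤ ∑ i, m i * J (Sum.inr i) ∧ (∑ i, m i * J (Sum.inr i)) ≤ k0))
    (i j : Fin n) (v : Fin n → ℂ) :
    ∃ Q : Polynomial ℂ, (Polynomial.X ^ (m j) ∣ Q) ∧ Q.natDegree ≤ 2 * k0 - d + m j ∧
      ∀ ζ : ℂ, ‖ζ‖ = 1 →
        ζ ^ k0 * eval (Sum.elim (fun l => (1 - ζ) ^ m l * v l)
            (fun l => (1 - conj ζ) ^ m l * conj (v l)))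
            (pderiv (Sum.inl i) (pderiv (Sum.inr j) P)) =
          (1 - ζ) ^ (d - m i - m j) * Q.eval ζ := by
  refine exists_polynomial_pow_mul_eval_circle_eq m v _ _ _ _ k0 fun J hJ => ?_
  obtain ⟨hd, hlo, hhi⟩ := hP _ (add_single_mem_support_of_mem_support_pderiv
    (add_single_mem_support_of_mem_support_pderiv hJ))
  simp only [← Finsupp.weight_sumElim_zero, ← Finsupp.weight_zero_sumElim, map_add,
    Finsupp.weight_single, Sum.elim_inl, Sum.elim_inr, Pi.zero_apply, smul_zero, one_smul,
    add_zero] at hd hlo hhi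
  omega

/-- there is a one-variable polynomial `Q`, divisible by `X^(m j)` and of degree
at most `2k₀ - d + m j`, with `ζ^k₀ · P_{z_i w_j}(h^v(ζ), conj (h^v(ζ)))
= (1-ζ)^(d - m_i - m_j) · Q(ζ)` on the unit circle. -/
theorem stmt1 (n : ℕ) (hn : 1 ≤ n) (m : Fin n → ℕ) (hm : ∀ i, 0 < m i)
    (d k0 : ℕ) (hdk0 : d ≤ 2 * k0) (hk0d : k0 < d)
    (P : MvPolynomial (Fin n ⊕ Fin n) ℂ)
    (hP : ∀ J ∈ P.support,
      ((∑ i, m i * J (Sum.inl i)) + (∑ i, m i * J (Sum.inr i)) = d ∧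
        d - k0 ≤ ∑ i, m i * J (Sum.inr i) ∧ (∑ i, m i * J (Sum.inr i)) ≤ k0))
    (i j : Fin n) (hij : m i + m j ≤ d) (v : Fin n → ℂ) :
    ∃ Q : Polynomial ℂ, (Polynomial.X ^ (m j) ∣ Q) ∧ Q.natDegree ≤ 2 * k0 - d + m j ∧
      ∀ ζ : ℂ, ‖ζ‖ = 1 →
        ζ ^ k0 * eval (Sum.elim (fun l => (1 - ζ) ^ m l * v l)
            (fun l => (1 - conj ζ) ^ m l * conj (v l)))
            (pderiv (Sum.inl i) (pderiv (Sum.inr j) P)) =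
          (1 - ζ) ^ (d - m i - m j) * Q.eval ζ :=
  stmt1_general n m d k0 P hP i j v
end

section
/- Fix an index i with m_i ≤ d, and fix v ∈ ℂ^n. Then there exists a polynomial T with complex coefficients in one variable, of degree at most 2k_0 − m_i, such that for every ζ ∈ ℂ with |ζ| = 1, ζ^{k_0} · P_{z_i}(h^v(ζ), \overline{h^v(ζ)}) = T(ζ). (In particular the boundary function ζ ↦ ζ^{k_0} P_{z_i}(h^v(ζ), \overline{h^v(ζ)}) extends holomorphically to the unit disc; this is the key fact making the model disc f^v a k_0-stationary disc.) -/
open MvPolynomial ComplexConjugate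

/-!
On the unit circle `conj ζ = ζ⁻¹`, so `1 - conj ζ = -ζ⁻¹ (1 - ζ)`. Hence a monomial `z^J w^K`
evaluated at `(h^v(ζ), conj h^v(ζ))` equals a constant times `(1 - ζ)^(M·J + M·K) (-ζ⁻¹)^(M·K)`.
Every monomial of `P_{z_i}` has `M·K ≤ k₀`, so multiplying by `ζ^k₀` clears the negative powers,
and its weighted degree `M·J + M·K = d - m_i` together with `M·K ≥ d - k₀` bounds the resulting
degree `M·J + k₀` by `2k₀ - m_i`.
-/

theorem MvPolynomial.add_single_mem_support_of_mem_support_pderiv_s3 {R σ : Type*} [CommSemiring R]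
    {p : MvPolynomial σ R} {i : σ} {J : σ →₀ ℕ} (hJ : J ∈ (pderiv i p).support) :
    J + Finsupp.single i 1 ∈ p.support := by
  rw [mem_support_iff, coeff_pderiv] at hJ
  exact mem_support_iff.mpr (left_ne_zero_of_mul hJ)

theorem Complex.one_sub_conj_of_norm_eq_one {ζ : ℂ} (hζ : ‖ζ‖ = 1) :
    1 - conj ζ = -ζ⁻¹ * (1 - ζ) := by
  have hζ0 : ζ ≠ 0 := by rintro rfl; simp at hζ
  rw [← Complex.inv_eq_conj hζ]
  field_simp
  ring

section ModelDisc

variable {σ : Type*} [Fintype σ] (m : σ → ℕ)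

/-- The weighted degree `M·J` in the holomorphic variables `z = Sum.inl`. -/
def holWeight (J : σ ⊕ σ → ℕ) : ℕ := ∑ l, m l * J (Sum.inl l)

/-- The weighted degree `M·K` in the antiholomorphic variables `w = Sum.inr`. -/
def antiholWeight (J : σ ⊕ σ → ℕ) : ℕ := ∑ l, m l * J (Sum.inr l)

theorem holWeight_add_single_inl [DecidableEq σ] (J : σ ⊕ σ →₀ ℕ) (i : σ) :
    holWeight m (J + Finsupp.single (Sum.inl i) 1 : σ ⊕ σ →₀ ℕ) = holWeight m J + m i := by
  simp [holWeight, Finsupp.single_apply, mul_add, Finset.sum_add_distrib]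

theorem antiholWeight_add_single_inl (J : σ ⊕ σ →₀ ℕ) (i : σ) :
    antiholWeight m (J + Finsupp.single (Sum.inl i) 1 : σ ⊕ σ →₀ ℕ) = antiholWeight m J := by
  simp [antiholWeight]

theorem prod_sum_elim_pow_mul_pow {M : Type*} [CommMonoid M] (a b : M) (f g : σ → M)
    (J : σ ⊕ σ → ℕ) :
    ∏ s, Sum.elim (fun l => a ^ m l * f l) (fun l => b ^ m l * g l) s ^ J s =
      a ^ holWeight m J * b ^ antiholWeight m J * ∏ s, Sum.elim f g s ^ J s := by
  simp only [Fintype.prod_sum_type, Sum.elim_inl, Sum.elim_inr, mul_pow, ← pow_mul,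
    Finset.prod_mul_distrib, Finset.prod_pow_eq_pow_sum, holWeight, antiholWeight]
  exact mul_mul_mul_comm _ _ _ _

/-- The point `(h^v(ζ), conj h^v(ζ))` of the model disc, with `z = Sum.inl`, `w = Sum.inr`. -/
def discPoint (v : σ → ℂ) (ζ : ℂ) : σ ⊕ σ → ℂ :=
  Sum.elim (fun l => (1 - ζ) ^ m l * v l) (fun l => (1 - conj ζ) ^ m l * conj (v l))

noncomputable def boundaryMonomial (v : σ → ℂ) (k : ℕ) (J : σ ⊕ σ → ℕ) : Polynomial ℂ :=
  Polynomial.C ((∏ s, Sum.elim v (fun l => conj (v l)) s ^ J s) * (-1) ^ antiholWeight m J) *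
    (1 - Polynomial.X) ^ (holWeight m J + antiholWeight m J) *
    Polynomial.X ^ (k - antiholWeight m J)

theorem natDegree_boundaryMonomial_le (v : σ → ℂ) (k : ℕ) (J : σ ⊕ σ → ℕ) :
    (boundaryMonomial m v k J).natDegree ≤
      holWeight m J + antiholWeight m J + (k - antiholWeight m J) := by
  unfold boundaryMonomial
  refine (Polynomial.natDegree_mul_le).trans (add_le_add ?_ (Polynomial.natDegree_X_pow_le _))
  refine (Polynomial.natDegree_C_mul_le _ _).trans
    ((Polynomial.natDegree_pow_le_of_le _ ?_).trans_eq (mul_one _))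
  exact (Polynomial.natDegree_sub_le _ _).trans (by simp)

theorem pow_mul_prod_discPoint_pow {v : σ → ℂ} {ζ : ℂ} (hζ : ‖ζ‖ = 1) {k : ℕ}
    {J : σ ⊕ σ → ℕ} (hJ : antiholWeight m J ≤ k) :
    ζ ^ k * ∏ s, discPoint m v ζ s ^ J s = (boundaryMonomial m v k J).eval ζ := by
  have hζ0 : ζ ≠ 0 := by rintro rfl; simp at hζ
  have hcancel : ζ ^ antiholWeight m J * ζ⁻¹ ^ antiholWeight m J = 1 := by
    rw [← mul_pow, mul_inv_cancel₀ hζ0, one_pow]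
  simp only [boundaryMonomial, Polynomial.eval_mul, Polynomial.eval_pow, Polynomial.eval_C,
    Polynomial.eval_sub, Polynomial.eval_one, Polynomial.eval_X]
  rw [discPoint, prod_sum_elim_pow_mul_pow, Complex.one_sub_conj_of_norm_eq_one hζ,
    ← Nat.sub_add_cancel hJ]
  simp only [Nat.add_sub_cancel, pow_add, mul_pow]
  linear_combination (ζ ^ (k - antiholWeight m J) * (1 - ζ) ^ holWeight m J *
    (1 - ζ) ^ antiholWeight m J * (-1) ^ antiholWeight m J *
    ∏ s, Sum.elim v (fun l => conj (v l)) s ^ J s) * hcancel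

noncomputable def boundaryPoly (v : σ → ℂ) (k : ℕ) (Q : MvPolynomial (σ ⊕ σ) ℂ) : Polynomial ℂ :=
  ∑ J ∈ Q.support, Polynomial.C (coeff J Q) * boundaryMonomial m v k J

theorem natDegree_boundaryPoly_le (v : σ → ℂ) {k N : ℕ} {Q : MvPolynomial (σ ⊕ σ) ℂ}
    (hN : ∀ J ∈ Q.support, holWeight m J + antiholWeight m J + (k - antiholWeight m J) ≤ N) :
    (boundaryPoly m v k Q).natDegree ≤ N :=
  Polynomial.natDegree_sum_le_of_forall_le _ _ fun J hJ =>
    (Polynomial.natDegree_C_mul_le _ _).trans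
      ((natDegree_boundaryMonomial_le m v k J).trans (hN J hJ))

theorem pow_mul_eval_discPoint {v : σ → ℂ} {ζ : ℂ} (hζ : ‖ζ‖ = 1) {k : ℕ}
    {Q : MvPolynomial (σ ⊕ σ) ℂ} (hk : ∀ J ∈ Q.support, antiholWeight m J ≤ k) :
    ζ ^ k * eval (discPoint m v ζ) Q = (boundaryPoly m v k Q).eval ζ := by
  rw [eval_eq', boundaryPoly, Polynomial.eval_finsetSum, Finset.mul_sum]
  refine Finset.sum_congr rfl fun J hJ => ?_
  rw [Polynomial.eval_mul, Polynomial.eval_C, ← pow_mul_prod_discPoint_pow m hζ (hk J hJ)]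
  ring

end ModelDisc

theorem stmt3_general (n : ℕ) (m : Fin n → ℕ)
    (d k0 : ℕ)
    (P : MvPolynomial (Fin n ⊕ Fin n) ℂ)
    (hP : ∀ J ∈ P.support,
      ((∑ i, m i * J (Sum.inl i)) + (∑ i, m i * J (Sum.inr i)) = d ∧
        d - k0 ≤ ∑ i, m i * J (Sum.inr i) ∧ (∑ i, m i * J (Sum.inr i)) ≤ k0))
    (i : Fin n) (v : Fin n → ℂ) :
    ∃ T : Polynomial ℂ, T.natDegree ≤ 2 * k0 - m i ∧
      ∀ ζ : ℂ, ‖ζ‖ = 1 →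
        ζ ^ k0 * eval (Sum.elim (fun l => (1 - ζ) ^ m l * v l)
            (fun l => (1 - conj ζ) ^ m l * conj (v l)))
            (pderiv (Sum.inl i) P) =
          T.eval ζ := by
  have hweights : ∀ J ∈ (pderiv (Sum.inl i) P).support,
      holWeight m J + antiholWeight m J + m i = d ∧
        d - k0 ≤ antiholWeight m J ∧ antiholWeight m J ≤ k0 := by
    intro J hJ
    have h := hP _ (add_single_mem_support_of_mem_support_pderiv_s3 hJ)
    change holWeight m _ + antiholWeight m _ = d ∧
      d - k0 ≤ antiholWeight m _ ∧ antiholWeight m _ ≤ k0 at h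
    rw [holWeight_add_single_inl, antiholWeight_add_single_inl] at h
    omega
  refine ⟨boundaryPoly m v k0 (pderiv (Sum.inl i) P), natDegree_boundaryPoly_le m v fun J hJ => ?_,
    fun ζ hζ => pow_mul_eval_discPoint m hζ fun J hJ => (hweights J hJ).2.2⟩
  have := hweights J hJ
  omega

/-- there is a one-variable polynomial `T` of degree at most `2k₀ - m i` with
`ζ^k₀ · P_{z_i}(h^v(ζ), conj (h^v(ζ))) = T(ζ)` on the unit circle; in particular this
boundary function extends holomorphically to the unit disc. -/
theorem stmt3 (n : ℕ) (hn : 1 ≤ n) (m : Fin n → ℕ) (hm : ∀ i, 0 < m i)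
    (d k0 : ℕ) (hdk0 : d ≤ 2 * k0) (hk0d : k0 < d)
    (P : MvPolynomial (Fin n ⊕ Fin n) ℂ)
    (hP : ∀ J ∈ P.support,
      ((∑ i, m i * J (Sum.inl i)) + (∑ i, m i * J (Sum.inr i)) = d ∧
        d - k0 ≤ ∑ i, m i * J (Sum.inr i) ∧ (∑ i, m i * J (Sum.inr i)) ≤ k0))
    (i : Fin n) (hi : m i ≤ d) (v : Fin n → ℂ) :
    ∃ T : Polynomial ℂ, T.natDegree ≤ 2 * k0 - m i ∧
      ∀ ζ : ℂ, ‖ζ‖ = 1 →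
        ζ ^ k0 * eval (Sum.elim (fun l => (1 - ζ) ^ m l * v l)
            (fun l => (1 - conj ζ) ^ m l * conj (v l)))
            (pderiv (Sum.inl i) P) =
          T.eval ζ :=
  stmt3_general n m d k0 P hP i v
end

section
/- Fix v ∈ ℂ^n. If P(h^v(ζ), \overline{h^v(ζ)}) = 0 for every ζ ∈ ℂ with |ζ| = 1, then P(v, \overline{v}) = 0, where \overline{v} = (\overline{v_1},…,\overline{v_n}). -/
/-!
On the unit circle `1 - conj ζ = (1 - ζ) · (-conj ζ)`, so weighted homogeneity lets us pull out
`(1 - ζ)^d` and turns the hypothesis into `P(v, t^M conj v) = 0` for every `t = -conj ζ` on the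
circle other than `-1`. The left side is a polynomial in `t` with infinitely many roots, so it
vanishes identically; at `t = 1` it is `P(v, conj v)`.
-/

open MvPolynomial ComplexConjugate

namespace MvPolynomial

theorem IsWeightedHomogeneous.eval_pow_mul {R σ : Type*} [CommSemiring R] {w : σ → ℕ}
    {φ : MvPolynomial σ R} {d : ℕ} (hφ : IsWeightedHomogeneous w φ d) (a : R) (x : σ → R) :
    eval (fun i => a ^ w i * x i) φ = a ^ d * eval x φ := by
  rw [eval_eq, eval_eq, Finset.mul_sum]
  refine Finset.sum_congr rfl fun J hJ => ?_
  have hweight : ∑ i ∈ J.support, J i * w i = d := by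
    rw [← hφ (mem_support_iff.mp hJ), Finsupp.weight_apply, Finsupp.sum]
    simp only [smul_eq_mul]
  simp only [mul_pow, ← pow_mul, Finset.prod_mul_distrib, Finset.prod_pow_eq_pow_sum]
  rw [← hweight]
  simp only [mul_comm (w _)]
  ring

theorem polynomial_eval_aeval {R σ : Type*} [CommSemiring R] (g : σ → Polynomial R)
    (φ : MvPolynomial σ R) (t : R) :
    (aeval g φ).eval t = eval (fun i => (g i).eval t) φ := by
  rw [← Polynomial.coe_evalRingHom, aeval_def, eval₂_comp_left]
  congr 1
  ext
  simp

theorem eval_eq_zero_of_infinite_setOf_eval_pow_mul_eq_zero {K σ : Type*} [Field K]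
    {φ : MvPolynomial σ K} (w : σ → ℕ) (x : σ → K)
    (h : {t : K | eval (fun i => t ^ w i * x i) φ = 0}.Infinite) :
    eval x φ = 0 := by
  set S : Polynomial K := aeval (fun i => Polynomial.X ^ w i * Polynomial.C (x i)) φ
  have hS : ∀ t, S.eval t = eval (fun i => t ^ w i * x i) φ := fun t => by
    simp only [S, polynomial_eval_aeval, Polynomial.eval_mul, Polynomial.eval_pow,
      Polynomial.eval_X, Polynomial.eval_C]
  have hS0 : S = 0 := Polynomial.eq_zero_of_infinite_isRoot S (by simpa [Polynomial.IsRoot, hS])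
  simpa [hS] using congrArg (Polynomial.eval 1) hS0

theorem isWeightedHomogeneous_sumElim {R ι : Type*} [CommSemiring R] [Fintype ι] (m : ι → ℕ)
    {φ : MvPolynomial (ι ⊕ ι) R} {d : ℕ}
    (hφ : ∀ J ∈ φ.support,
      (∑ i, m i * J (Sum.inl i)) + (∑ i, m i * J (Sum.inr i)) = d) :
    IsWeightedHomogeneous (Sum.elim m m) φ d := fun J hJ => by
  rw [← hφ J (mem_support_iff.mpr hJ), Finsupp.weight_apply,
    Finsupp.sum_fintype _ _ (by simp), Fintype.sum_sum_type]
  simp [mul_comm]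

end MvPolynomial

theorem Complex.infinite_sphere_zero_one : (Metric.sphere (0 : ℂ) 1).Infinite :=
  (isPreconnected_sphere (by simp [Complex.rank_real_complex]) 0 1).infinite_of_nontrivial
    ⟨1, by simp, -1, by simp, by norm_num⟩

theorem stmt4_general (n : ℕ) (m : Fin n → ℕ)
    (d k0 : ℕ)
    (P : MvPolynomial (Fin n ⊕ Fin n) ℂ)
    (hP : ∀ J ∈ P.support,
      ((∑ i, m i * J (Sum.inl i)) + (∑ i, m i * J (Sum.inr i)) = d ∧
        d - k0 ≤ ∑ i, m i * J (Sum.inr i) ∧ (∑ i, m i * J (Sum.inr i)) ≤ k0))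
    (v : Fin n → ℂ)
    (hvanish : ∀ ζ : ℂ, ‖ζ‖ = 1 →
      eval (Sum.elim (fun l => (1 - ζ) ^ m l * v l)
        (fun l => (1 - conj ζ) ^ m l * conj (v l))) P = 0) :
    eval (Sum.elim v (fun l => conj (v l))) P = 0 := by
  have hhom := isWeightedHomogeneous_sumElim m fun J hJ => (hP J hJ).1
  refine eval_eq_zero_of_infinite_setOf_eval_pow_mul_eq_zero (Sum.elim (fun _ => 0) m) _
    ((Complex.infinite_sphere_zero_one.sdiff (Set.finite_singleton (-1))).mono ?_)
  rintro t ⟨ht, ht1⟩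
  have hunit : conj t * t = 1 := by
    rw [Complex.conj_mul', mem_sphere_zero_iff_norm.mp ht]; simp
  set ζ := -conj t
  have hζ : 1 - ζ ≠ 0 := fun h => ht1 <| by
    have : conj t = -1 := by linear_combination h
    simpa using congrArg conj this
  have hconj : 1 - conj ζ = (1 - ζ) * t := by
    simp only [ζ, map_neg, Complex.conj_conj]
    linear_combination -hunit
  have hpoint :
      Sum.elim (fun l => (1 - ζ) ^ m l * v l) (fun l => (1 - conj ζ) ^ m l * conj (v l)) =
        fun i => (1 - ζ) ^ Sum.elim m m i *
          (t ^ Sum.elim (fun _ => 0) m i * Sum.elim v (conj ∘ v) i) := by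
    ext (i | i) <;> simp [hconj, mul_pow, mul_assoc]
  have hζvanish := hvanish ζ (by simpa [ζ] using ht)
  rw [hpoint, hhom.eval_pow_mul] at hζvanish
  exact (mul_eq_zero.mp hζvanish).resolve_left (pow_ne_zero _ hζ)

/-- if `P(h^v(ζ), conj (h^v(ζ))) = 0` for every `ζ` on the unit circle, then
`P(v, conj v) = 0`. -/
theorem stmt4 (n : ℕ) (hn : 1 ≤ n) (m : Fin n → ℕ) (hm : ∀ i, 0 < m i)
    (d k0 : ℕ) (hdk0 : d ≤ 2 * k0) (hk0d : k0 < d)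
    (P : MvPolynomial (Fin n ⊕ Fin n) ℂ)
    (hP : ∀ J ∈ P.support,
      ((∑ i, m i * J (Sum.inl i)) + (∑ i, m i * J (Sum.inr i)) = d ∧
        d - k0 ≤ ∑ i, m i * J (Sum.inr i) ∧ (∑ i, m i * J (Sum.inr i)) ≤ k0))
    (v : Fin n → ℂ)
    (hvanish : ∀ ζ : ℂ, ‖ζ‖ = 1 →
      eval (Sum.elim (fun l => (1 - ζ) ^ m l * v l)
        (fun l => (1 - conj ζ) ^ m l * conj (v l))) P = 0) :
    eval (Sum.elim v (fun l => conj (v l))) P = 0 :=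
  stmt4_general n m d k0 P hP v hvanish
end

section
/- Let f, h : ℂ → ℂ be continuous on the closed unit disc and holomorphic on the open unit disc. If f(ζ) = ζ^{−1} · \overline{h(ζ)} for every ζ ∈ ℂ with |ζ| = 1, then f and h vanish identically on the closed unit disc. -/
/-!
On the unit circle `g ζ = ζ * f ζ * h ζ` equals `|h ζ|²`, so the holomorphic function `g` vanishes
at `0` and has nonnegative real part on the boundary. The maximum modulus principle applied to
`exp (-g)`, whose modulus is `exp (-re g)` and equals `1` at the centre, forces `re g ≡ 0`; hence
`h`, and then `f`, vanish on the circle, and by the maximum modulus principle on the whole disc.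
-/

open ComplexConjugate Metric Set

namespace Complex

variable {E : Type*} [NormedAddCommGroup E] [NormedSpace ℂ E] [Nontrivial E]

theorem re_eq_zero_on_closure_of_re_nonneg_on_frontier {g : E → ℂ} {U : Set E} {c : E}
    (hb : Bornology.IsBounded U) (hc : IsPreconnected U) (ho : IsOpen U) (hg : DiffContOnCl ℂ g U)
    (hcU : c ∈ U) (hgc : (g c).re = 0) (hfr : ∀ z ∈ frontier U, 0 ≤ (g z).re) :
    ∀ z ∈ closure U, (g z).re = 0 := by
  set F : E → ℂ := fun z ↦ exp (-g z)
  have hF : DiffContOnCl ℂ F U := differentiable_exp.comp_diffContOnCl hg.neg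
  have hnorm : ∀ z, ‖F z‖ = Real.exp (-(g z).re) := fun z ↦ by simp [F, norm_exp]
  have hle : ∀ z ∈ closure U, ‖F z‖ ≤ 1 := fun z hz ↦
    norm_le_of_forall_mem_frontier_norm_le hb hF (fun w hw ↦ by
      rw [hnorm]; exact Real.exp_le_one_iff.2 (neg_nonpos.2 (hfr w hw))) hz
  have hmax : IsMaxOn (norm ∘ F) U c := fun z hz ↦ by
    simpa [hnorm c, hgc] using hle z (subset_closure hz)
  intro z hz
  simpa [hnorm, hgc] using norm_eqOn_closure_of_isPreconnected_of_isMaxOn hc ho hF hcU hmax hz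

end Complex

lemma diffContOnCl_ball_zero_one {g : ℂ → ℂ} (hc : ContinuousOn g {ζ | ‖ζ‖ ≤ 1})
    (hd : DifferentiableOn ℂ g {ζ | ‖ζ‖ < 1}) : DiffContOnCl ℂ g (ball 0 1) := by
  have hball : ball (0 : ℂ) 1 = {ζ | ‖ζ‖ < 1} := by ext; simp
  have hclosure : closure (ball (0 : ℂ) 1) = {ζ | ‖ζ‖ ≤ 1} := by ext; simp [closure_ball]
  exact ⟨hball ▸ hd, hclosure ▸ hc⟩

/-- if `f, h` are continuous on the closed unit disc, holomorphic on the open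
unit disc, and `f(ζ) = ζ⁻¹ · conj (h(ζ))` on the unit circle, then `f` and `h` vanish
identically on the closed unit disc. -/
theorem stmt5 (f h : ℂ → ℂ)
    (hfc : ContinuousOn f {ζ : ℂ | ‖ζ‖ ≤ 1})
    (hfd : DifferentiableOn ℂ f {ζ : ℂ | ‖ζ‖ < 1})
    (hhc : ContinuousOn h {ζ : ℂ | ‖ζ‖ ≤ 1})
    (hhd : DifferentiableOn ℂ h {ζ : ℂ | ‖ζ‖ < 1})
    (hbd : ∀ ζ : ℂ, ‖ζ‖ = 1 → f ζ = ζ⁻¹ * conj (h ζ)) :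
    ∀ ζ : ℂ, ‖ζ‖ ≤ 1 → f ζ = 0 ∧ h ζ = 0 := by
  have hf := diffContOnCl_ball_zero_one hfc hfd
  have hh := diffContOnCl_ball_zero_one hhc hhd
  have hcircle : ∀ ζ ∈ frontier (ball (0 : ℂ) 1), ‖ζ‖ = 1 := fun ζ hζ ↦ by
    simpa [frontier_ball] using hζ
  have hprod : ∀ ζ ∈ frontier (ball (0 : ℂ) 1), ζ * f ζ * h ζ = Complex.normSq (h ζ) := by
    intro ζ hζ
    have hζ0 : ζ ≠ 0 := norm_ne_zero_iff.1 (by simp [hcircle ζ hζ])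
    rw [hbd ζ (hcircle ζ hζ), ← Complex.mul_conj]
    field_simp
  have hg : DiffContOnCl ℂ (fun ζ ↦ ζ * f ζ * h ζ) (ball 0 1) :=
    ⟨(differentiableOn_id.mul hf.1).mul hh.1, (continuousOn_id.mul hf.2).mul hh.2⟩
  have hre := Complex.re_eq_zero_on_closure_of_re_nonneg_on_frontier isBounded_ball
    (convex_ball (0 : ℂ) 1).isPreconnected isOpen_ball hg
    (mem_ball_self one_pos) (by simp) (fun ζ hζ ↦ by
      simpa [hprod ζ hζ] using Complex.normSq_nonneg (h ζ))
  have hh0 : EqOn h 0 (frontier (ball 0 1)) := fun ζ hζ ↦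
    Complex.normSq_eq_zero.1 (by simpa [hprod ζ hζ] using hre ζ (frontier_subset_closure hζ))
  have hf0 : EqOn f 0 (frontier (ball 0 1)) := fun ζ hζ ↦ by
    simp [hbd ζ (hcircle ζ hζ), hh0 hζ]
  intro ζ hζ
  have hζ' : ζ ∈ closure (ball (0 : ℂ) 1) := by simpa [closure_ball] using hζ
  exact ⟨Complex.eqOn_closure_of_eqOn_frontier isBounded_ball hf diffContOnCl_const hf0 hζ',
    Complex.eqOn_closure_of_eqOn_frontier isBounded_ball hh diffContOnCl_const hh0 hζ'⟩
end

section
/- Let g : ℂ → ℂ be continuous on the closed unit disc and holomorphic on the open unit disc, and let k be a natural number. If g(ζ) = ζ^k · \overline{g(ζ)} for every ζ ∈ ℂ with |ζ| = 1, then there exists a polynomial p with complex coefficients of degree at most k such that g(ζ) = p(ζ) for every ζ in the closed unit disc. -/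
open ComplexConjugate

/-!
Let `J m = circleFourier g m 1 = ∫₀^{2π} e^{-imθ} g(e^{iθ}) dθ`. Cauchy's theorem gives `J m = 0`
for `m < 0`, and Cauchy's formula gives `J n = 2π g⁽ⁿ⁾(0) / n!` for `n ≥ 0`. On the circle `ζ^k = e^{ikθ}`, so the
boundary relation becomes `J m = conj (J (k - m))`. Hence for `n > k` we get `J n = 0`, the Taylor
series of `g` at `0` stops at degree `k`, and continuity carries the identity to the closed disc.
-/

open Complex Metric Set Real Polynomial

/-- `2π` times the `m`-th Fourier coefficient of `θ ↦ f (r e^{iθ})`. -/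
noncomputable def circleFourier (f : ℂ → ℂ) (m : ℤ) (r : ℝ) : ℂ :=
  ∫ θ in (0)..(2 * π), cexp (-(m * θ * I)) * f (circleMap 0 r θ)

noncomputable def taylorPolynomial (f : ℂ → ℂ) (k : ℕ) : ℂ[X] :=
  ∑ n ∈ Finset.range (k + 1), C (iteratedDeriv n f 0 / n.factorial) * X ^ n

section

variable {f : ℂ → ℂ} {r : ℝ} {k : ℕ}

lemma circleIntegral_zpow_mul_eq_circleFourier (m : ℤ) (hr : r ≠ 0) :
    ∮ z in C(0, r), z ^ m * f z = I * r ^ (m + 1) * circleFourier f (-(m + 1)) r := by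
  rw [circleFourier, ← intervalIntegral.integral_const_mul]
  refine intervalIntegral.integral_congr fun θ _ => ?_
  have hexp : cexp (-(((-(m + 1) : ℤ) : ℂ) * θ * I)) = cexp (θ * I) ^ (m + 1) := by
    rw [← exp_int_mul]; push_cast; ring_nf
  simp only [deriv_circleMap, circleMap_zero, smul_eq_mul, hexp, mul_zpow,
    zpow_add_one₀ (ofReal_ne_zero.mpr hr), zpow_add_one₀ (Complex.exp_ne_zero _)]
  ring

lemma circleFourier_eq_zero_of_neg (hr : 0 < r) (hc : ContinuousOn f (closedBall 0 r))
    (hd : DifferentiableOn ℂ f (ball 0 r)) {m : ℤ} (hm : m < 0) : circleFourier f m r = 0 := by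
  obtain ⟨n, rfl⟩ : ∃ n : ℕ, m = -((n : ℤ) + 1) := ⟨(-m - 1).toNat, by omega⟩
  have hcauchy : ∮ z in C(0, r), z ^ (n : ℤ) * f z = 0 :=
    circleIntegral_eq_zero_of_differentiable_on_off_countable hr.le countable_empty
      ((continuous_pow n).continuousOn.mul hc)
      fun z hz => (differentiableAt_pow n).mul (hd.differentiableAt (isOpen_ball.mem_nhds hz.1))
  rw [circleIntegral_zpow_mul_eq_circleFourier n hr.ne'] at hcauchy
  exact (mul_eq_zero.mp hcauchy).resolve_left
    (mul_ne_zero I_ne_zero (zpow_ne_zero _ (ofReal_ne_zero.mpr hr.ne')))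

lemma circleFourier_natCast_eq_iteratedDeriv (hr : 0 < r) (hc : ContinuousOn f (closedBall 0 r))
    (hd : DifferentiableOn ℂ f (ball 0 r)) (n : ℕ) :
    circleFourier f n r = 2 * π * r ^ n * (iteratedDeriv n f 0 / n.factorial) := by
  have hcauchy := circleIntegral_one_div_sub_center_pow_smul_of_differentiable_on_off_countable
    hr n countable_empty hc fun z hz => hd.differentiableAt (isOpen_ball.mem_nhds hz.1)
  have hzpow : ∀ z : ℂ, (1 / (z - 0) ^ (n + 1)) • f z = z ^ (-((n : ℤ) + 1)) * f z := by
    intro z; rw [sub_zero, smul_eq_mul, zpow_neg, one_div]; norm_cast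
  have hexponent : -((n : ℤ) + 1) + 1 = -n := by ring
  simp only [hzpow] at hcauchy
  rw [circleIntegral_zpow_mul_eq_circleFourier _ hr.ne', hexponent, neg_neg, zpow_neg,
    zpow_natCast, smul_eq_mul] at hcauchy
  have hr' : (r : ℂ) ^ n ≠ 0 := pow_ne_zero _ (ofReal_ne_zero.mpr hr.ne')
  apply mul_left_cancel₀ (mul_ne_zero I_ne_zero (inv_ne_zero hr'))
  rw [hcauchy]
  field_simp

lemma circleFourier_one_eq_conj (hbd : ∀ ζ : ℂ, ‖ζ‖ = 1 → f ζ = ζ ^ k * conj (f ζ)) (m : ℤ) :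
    circleFourier f m 1 = conj (circleFourier f (k - m) 1) := by
  rw [circleFourier, circleFourier, ← intervalIntegral.intervalIntegral_conj]
  refine intervalIntegral.integral_congr fun θ _ => ?_
  have hζ : circleMap 0 1 θ = cexp (θ * I) := by simp [circleMap_zero]
  rw [hζ]
  conv_lhs => rw [hbd _ (norm_exp_ofReal_mul_I θ)]
  rw [map_mul, ← exp_conj, ← Complex.exp_nat_mul, ← mul_assoc, ← Complex.exp_add]
  congr 2
  simp only [map_neg, map_mul, map_intCast, conj_ofReal, conj_I]
  push_cast
  ring

lemma iteratedDeriv_eq_zero_of_eq_pow_mul_conj (hc : ContinuousOn f (closedBall 0 1))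
    (hd : DifferentiableOn ℂ f (ball 0 1)) (hbd : ∀ ζ : ℂ, ‖ζ‖ = 1 → f ζ = ζ ^ k * conj (f ζ))
    {n : ℕ} (hn : k < n) : iteratedDeriv n f 0 = 0 := by
  have hcoeff := circleFourier_natCast_eq_iteratedDeriv one_pos hc hd n
  rw [circleFourier_one_eq_conj hbd, circleFourier_eq_zero_of_neg one_pos hc hd (by omega),
    map_zero, eq_comm] at hcoeff
  simpa [Real.pi_ne_zero, Nat.factorial_ne_zero] using hcoeff

lemma natDegree_taylorPolynomial_le (f : ℂ → ℂ) (k : ℕ) : (taylorPolynomial f k).natDegree ≤ k :=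
  natDegree_sum_le_of_forall_le _ _ fun n hn =>
    (natDegree_C_mul_X_pow_le _ n).trans (Nat.lt_succ_iff.mp (Finset.mem_range.mp hn))

lemma eqOn_taylorPolynomial_of_iteratedDeriv_eq_zero (hr : r ≠ 0)
    (hc : ContinuousOn f (closedBall 0 r)) (hd : DifferentiableOn ℂ f (ball 0 r))
    (hk : ∀ n, k < n → iteratedDeriv n f 0 = 0) :
    EqOn f (taylorPolynomial f k).eval (closedBall 0 r) := by
  have hball : EqOn f (taylorPolynomial f k).eval (ball 0 r) := by
    intro z hz
    show f z = (taylorPolynomial f k).eval z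
    rw [← taylorSeries_eq_on_ball' hz hd, tsum_eq_sum (s := Finset.range (k + 1))
      fun n hn => by simp [hk n (by simpa using hn)], taylorPolynomial, eval_finsetSum]
    refine Finset.sum_congr rfl fun n _ => ?_
    simp only [eval_mul, eval_C, eval_pow, eval_X, sub_zero]
    ring
  refine hball.of_subset_closure hc (Polynomial.continuousOn _) ball_subset_closedBall ?_
  rw [closure_ball 0 hr]

end

/-- if `g` is continuous on the closed unit disc, holomorphic on the open unit
disc, and `g(ζ) = ζ^k · conj (g(ζ))` on the unit circle, then `g` coincides on the closed
unit disc with a polynomial of degree at most `k`. -/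
theorem stmt6 (g : ℂ → ℂ) (k : ℕ)
    (hgc : ContinuousOn g {ζ : ℂ | ‖ζ‖ ≤ 1})
    (hgd : DifferentiableOn ℂ g {ζ : ℂ | ‖ζ‖ < 1})
    (hbd : ∀ ζ : ℂ, ‖ζ‖ = 1 → g ζ = ζ ^ k * conj (g ζ)) :
    ∃ p : Polynomial ℂ, p.natDegree ≤ k ∧
      ∀ ζ : ℂ, ‖ζ‖ ≤ 1 → g ζ = p.eval ζ := by
  have hc : ContinuousOn g (closedBall 0 1) := hgc.mono fun _ => mem_closedBall_zero_iff.mp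
  have hd : DifferentiableOn ℂ g (ball 0 1) := hgd.mono fun _ => mem_ball_zero_iff.mp
  refine ⟨taylorPolynomial g k, natDegree_taylorPolynomial_le g k, fun ζ hζ => ?_⟩
  exact eqOn_taylorPolynomial_of_iteratedDeriv_eq_zero one_ne_zero hc hd
    (fun _ hn => iteratedDeriv_eq_zero_of_eq_pow_mul_conj hc hd hbd hn)
    (mem_closedBall_zero_iff.mpr hζ)
end

section
/- Let n ≥ 1, let q and s be n × n complex matrices, and let u_1, …, u_n ∈ ℂ with |u_ℓ| = 1 for every ℓ. Let A be the 2n × 2n complex matrix whose entries are: A_{2ℓ−1, 2p−1} = \overline{u_ℓ} if ℓ = p and 0 otherwise; A_{2ℓ−1, 2p} = q_{ℓp} u_ℓ + s_{ℓp} \overline{u_ℓ}; A_{2ℓ, 2p−1} = −i \overline{u_ℓ} if ℓ = p and 0 otherwise; A_{2ℓ, 2p} = i (q_{ℓp} u_ℓ − s_{ℓp} \overline{u_ℓ}). Then det A = (2i)^n · det q. -/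
/-!
Reordering rows and columns as (odd indices, even indices) turns `A` into the block matrix
`[[D, M], [-i D, E]]` with `D = diag(ū)`. Adding `i` times the first block row to the second is
unimodular and leaves `E + i M = diag(2i u) * q`, so `det A = ∏ (ū · 2i u) · det q = (2i)^n det q`
because `ū u = |u|² = 1`.
-/

open ComplexConjugate

namespace Matrix

variable {ι R : Type*} [Fintype ι] [DecidableEq ι] [CommRing R]

theorem det_of_finTwo_blocks (A B C D : Matrix ι ι R) :
    (of fun r c : ι × Fin 2 =>
        if r.2 = 0 then (if c.2 = 0 then A r.1 c.1 else B r.1 c.1)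
        else (if c.2 = 0 then C r.1 c.1 else D r.1 c.1)).det = (fromBlocks A B C D).det := by
  let toSum : ι × Fin 2 ≃ ι ⊕ ι :=
    (Equiv.prodComm ι (Fin 2)).trans
      ((finTwoEquiv.prodCongr (Equiv.refl ι)).trans (Equiv.boolProdEquivSum ι))
  rw [← det_submatrix_equiv_self toSum]
  congr 1
  ext ⟨i, a⟩ ⟨j, b⟩
  fin_cases a <;> fin_cases b <;> rfl

theorem det_fromBlocks_smul_left (A B D : Matrix ι ι R) (c : R) :
    (fromBlocks A B (c • A) D).det = A.det * (D - c • B).det := by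
  have hfactor :
      fromBlocks A B (c • A) D = fromBlocks 1 0 (c • 1) 1 * fromBlocks A B 0 (D - c • B) := by
    simp [fromBlocks_multiply]
  rw [hfactor, det_mul, det_fromBlocks_zero₁₂, det_fromBlocks_zero₂₁]
  simp

end Matrix

theorem stmt7_general (n : ℕ) (q s : Matrix (Fin n) (Fin n) ℂ)
    (u : Fin n → ℂ) (hu : ∀ l, ‖u l‖ = 1) :
    (Matrix.of fun r c : Fin n × Fin 2 =>
        if r.2 = 0 then
          (if c.2 = 0 then (if r.1 = c.1 then conj (u r.1) else 0)
           else q r.1 c.1 * u r.1 + s r.1 c.1 * conj (u r.1))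
        else
          (if c.2 = 0 then (if r.1 = c.1 then -Complex.I * conj (u r.1) else 0)
           else Complex.I * (q r.1 c.1 * u r.1 - s r.1 c.1 * conj (u r.1)))).det
      = (2 * Complex.I) ^ n * q.det := by
  open Matrix in
  set D : Matrix (Fin n) (Fin n) ℂ := diagonal fun l => conj (u l)
  set M : Matrix (Fin n) (Fin n) ℂ := of fun l p => q l p * u l + s l p * conj (u l)
  set E : Matrix (Fin n) (Fin n) ℂ := of fun l p => Complex.I * (q l p * u l - s l p * conj (u l))
  have hC : (-Complex.I) • D = diagonal fun l => -Complex.I * conj (u l) := by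
    rw [← diagonal_smul]
    rfl
  have hE : E - (-Complex.I) • M = diagonal (fun l => 2 * Complex.I * u l) * q := by
    ext l p
    simp only [E, M, neg_smul, sub_neg_eq_add, smul_of, Matrix.add_apply, of_apply, Pi.smul_apply,
      smul_eq_mul, diagonal_mul]
    ring
  calc _ = (fromBlocks D M ((-Complex.I) • D) E).det := by
        rw [hC, ← det_of_finTwo_blocks]
        simp only [D, M, E, diagonal_apply, of_apply]
    _ = (∏ l, 2 * Complex.I * (conj (u l) * u l)) * q.det := by
        rw [det_fromBlocks_smul_left, hE, det_mul, det_diagonal, det_diagonal, ← mul_assoc,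
          ← Finset.prod_mul_distrib]
        simp only [mul_left_comm]
    _ = _ := by simp [Complex.conj_mul', hu]

/-- determinant identity `det A = (2i)^n · det q` for the `2n × 2n` matrix built
from `q`, `s` and unimodular numbers `u_ℓ`. Rows and columns are indexed by `Fin n × Fin 2`,
where `(ℓ, 0)` plays the role of the index `2ℓ - 1` and `(ℓ, 1)` that of `2ℓ`. -/
theorem stmt7 (n : ℕ) (hn : 1 ≤ n) (q s : Matrix (Fin n) (Fin n) ℂ)
    (u : Fin n → ℂ) (hu : ∀ l, ‖u l‖ = 1) :
    (Matrix.of fun r c : Fin n × Fin 2 =>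
        if r.2 = 0 then
          (if c.2 = 0 then (if r.1 = c.1 then conj (u r.1) else 0)
           else q r.1 c.1 * u r.1 + s r.1 c.1 * conj (u r.1))
        else
          (if c.2 = 0 then (if r.1 = c.1 then -Complex.I * conj (u r.1) else 0)
           else Complex.I * (q r.1 c.1 * u r.1 - s r.1 c.1 * conj (u r.1)))).det
      = (2 * Complex.I) ^ n * q.det :=
  stmt7_general n q s u hu
end

section
/- Let n ≥ 1 and let d be an even natural number with d ≥ 2. Let P₀ = z_1^{d/2} w_1^{d/2} + ⋯ + z_n^{d/2} w_n^{d/2} (the polynomial representing |z_1|^d + ⋯ + |z_n|^d when w_i = \bar z_i), with all weights m_i = 1 and k_0 = d/2. Then for every v ∈ ℂ^n and every ζ ∈ ℂ with ζ ≠ 0, the determinant of the n × n matrix whose (i,j) entry is ζ^{k_0} · (P₀)_{z_i w_j}(v, −ζ^{−1}\overline{v}) equals (d/2)^{2n} · (−1)^{n(d/2 − 1)} · (∏_{i=1}^n |v_i|^{d−2}) · ζ^n. In particular, if all v_i ≠ 0 this function is a nonzero constant multiple of ζ^n, so its winding number on the unit circle is n. -/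
open MvPolynomial ComplexConjugate

/- With `k = d/2`, the mixed Hessian `(P₀)_{z_i w_j}` is diagonal with entries `k² z_iᵏ⁻¹ w_iᵏ⁻¹`.
At `(v, -ζ⁻¹ v̄)` and after multiplying by `ζᵏ`, the `i`-th entry becomes
`k² (-1)ᵏ⁻¹ |v_i|^(d-2) ζ`, since `ζᵏ ζ^-(k-1) = ζ`; the determinant is the product of these. -/

theorem pderiv_inl_pderiv_inr_sum_X_pow_mul_X_pow {R σ : Type*} [CommRing R] [Fintype σ]
    [DecidableEq σ] (k : ℕ) (i j : σ) :
    pderiv (Sum.inl i) (pderiv (Sum.inr j)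
        (∑ l, X (Sum.inl l) ^ k * X (Sum.inr l) ^ k : MvPolynomial (σ ⊕ σ) R)) =
      if i = j then C ((k : R) ^ 2) * X (Sum.inl i) ^ (k - 1) * X (Sum.inr i) ^ (k - 1)
      else 0 := by
  rcases eq_or_ne i j with rfl | hij
  · simp only [map_sum, Derivation.leibniz, Derivation.leibniz_pow, pderiv_X, Pi.single_apply,
      Sum.inr.injEq, smul_eq_mul, mul_ite, mul_one, mul_zero, smul_ite, nsmul_eq_mul, reduceCtorEq,
      add_zero, Finset.sum_ite_eq', Finset.mem_univ, ↓reduceIte, Derivation.map_natCast, zero_add,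
      C_pow, map_natCast]
    ring
  · simp [pderiv_X, Pi.single_apply, hij, Ne.symm hij]

/-- The factor `k` makes the identity true at `k = 0`, where `k - 1` truncates to `0`. -/
theorem natCast_mul_pow_mul_neg_inv_mul_pow {K : Type*} [Field K] (ζ b : K) (k : ℕ) :
    k * ζ ^ k * (-ζ⁻¹ * b) ^ (k - 1) = k * (-1) ^ (k - 1) * b ^ (k - 1) * ζ := by
  rcases eq_or_ne ζ 0 with rfl | hζ
  · rcases k with _ | _ | k <;> simp
  · obtain _ | k := k
    · simp
    · rw [Nat.add_sub_cancel, neg_mul, neg_pow, mul_pow, pow_succ, inv_pow]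
      field_simp

theorem Complex.mul_conj_pow (z : ℂ) (k : ℕ) : (z * conj z) ^ k = (‖z‖ : ℂ) ^ (2 * k) := by
  rw [Complex.mul_conj', pow_mul]

theorem stmt8_general (n : ℕ) (d : ℕ) (hd : Even d)
    (v : Fin n → ℂ) (ζ : ℂ) :
    (Matrix.of fun i j : Fin n =>
        ζ ^ (d / 2) *
          eval (Sum.elim v fun l => -ζ⁻¹ * conj (v l))
            (pderiv (Sum.inl i) (pderiv (Sum.inr j)
              (∑ l : Fin n, X (Sum.inl l) ^ (d / 2) * X (Sum.inr l) ^ (d / 2) :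
                MvPolynomial (Fin n ⊕ Fin n) ℂ)))).det
      = ((d / 2 : ℕ) : ℂ) ^ (2 * n) * (-1) ^ (n * (d / 2 - 1)) *
          (∏ l, (‖v l‖ : ℂ) ^ (d - 2)) * ζ ^ n := by
  set k := d / 2
  have hdk : d - 2 = 2 * (k - 1) := by obtain ⟨m, rfl⟩ := hd; omega
  have hdiag : (Matrix.of fun i j : Fin n =>
        ζ ^ k * eval (Sum.elim v fun l => -ζ⁻¹ * conj (v l))
          (pderiv (Sum.inl i) (pderiv (Sum.inr j)
            (∑ l : Fin n, X (Sum.inl l) ^ k * X (Sum.inr l) ^ k :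
              MvPolynomial (Fin n ⊕ Fin n) ℂ)))) =
      Matrix.diagonal fun i => (k : ℂ) ^ 2 * (-1) ^ (k - 1) * ζ * (‖v i‖ : ℂ) ^ (d - 2) := by
    ext i j
    rw [Matrix.of_apply, pderiv_inl_pderiv_inr_sum_X_pow_mul_X_pow, Matrix.diagonal_apply]
    split_ifs with hij
    · subst hij
      simp only [eval_mul, eval_pow, eval_C, eval_X, Sum.elim_inl, Sum.elim_inr]
      rw [hdk, ← Complex.mul_conj_pow]
      linear_combination (k : ℂ) * v i ^ (k - 1) *
        natCast_mul_pow_mul_neg_inv_mul_pow ζ (conj (v i)) k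
    · simp
  rw [hdiag, Matrix.det_diagonal, Finset.prod_mul_distrib, Finset.prod_const, Finset.card_fin]
  ring

/-- for the model polynomial `P₀ = ∑ z_i^(d/2) w_i^(d/2)` (weights all `1`,
`k₀ = d/2`), for every `v` and every `ζ ≠ 0`,
`det (ζ^(d/2) · (P₀)_{z_i w_j}(v, -ζ⁻¹ conj v))
  = (d/2)^(2n) · (-1)^(n(d/2 - 1)) · (∏ |v_i|^(d-2)) · ζ^n`. -/
theorem stmt8 (n : ℕ) (hn : 1 ≤ n) (d : ℕ) (hd : Even d) (hd2 : 2 ≤ d)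
    (v : Fin n → ℂ) (ζ : ℂ) (hζ : ζ ≠ 0) :
    (Matrix.of fun i j : Fin n =>
        ζ ^ (d / 2) *
          eval (Sum.elim v fun l => -ζ⁻¹ * conj (v l))
            (pderiv (Sum.inl i) (pderiv (Sum.inr j)
              (∑ l : Fin n, X (Sum.inl l) ^ (d / 2) * X (Sum.inr l) ^ (d / 2) :
                MvPolynomial (Fin n ⊕ Fin n) ℂ)))).det
      = ((d / 2 : ℕ) : ℂ) ^ (2 * n) * (-1) ^ (n * (d / 2 - 1)) *
          (∏ l, (‖v l‖ : ℂ) ^ (d - 2)) * ζ ^ n :=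
  stmt8_general n d hd v ζ
end

section
/- Let g : ℂ → ℂ be continuous on the closed unit disc and holomorphic on the open unit disc. Let N be a natural number and let c : ℤ → ℂ satisfy c_e = 0 for |e| > N and c_{−e} = \overline{c_e} for all e. If g(ζ) + \overline{g(ζ)} = 2 · Σ_{e = −N}^{N} c_e ζ^e for every ζ ∈ ℂ with |ζ| = 1 (where ζ^e denotes the integer power), then g′(0) = 2 c_1. -/
/-!
Subtract from `g` the polynomial `Q z = c₀ + 2 ∑_{n=1}^N cₙ zⁿ`. Since `c_{-e} = conj c_e`, the real
part of `Q` on the unit circle is `∑ c_e ζ^e`, so `h = g - Q` has vanishing real part there.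
The maximum modulus principle applied to `exp (± h)` gives `Re h = 0` on the whole disc, and then
the Cauchy–Riemann equations force `h' = 0`, i.e. `g' 0 = Q' 0 = 2 c₁`.
-/

open ComplexConjugate Finset Filter Topology

theorem Finset.sum_Icc_neg_natCast {M : Type*} [AddCommMonoid M] (f : ℤ → M) (N : ℕ) :
    ∑ e ∈ Icc (-(N : ℤ)) N, f e = f 0 + ∑ n ∈ Icc 1 N, (f n + f (-n)) := by
  induction N with
  | zero => simp
  | succ N ih =>
    have hIcc : Icc (-((N + 1 : ℕ) : ℤ)) (N + 1 : ℕ) =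
        insert (-((N + 1 : ℕ) : ℤ)) (insert ((N + 1 : ℕ) : ℤ) (Icc (-(N : ℤ)) N)) := by
      ext e; simp only [mem_Icc, mem_insert]; omega
    rw [hIcc, sum_insert (by simp only [mem_insert, mem_Icc]; omega),
      sum_insert (by simp only [mem_Icc]; omega), ih,
      sum_Icc_succ_top (by omega)]
    abel

namespace Complex

theorem re_le_of_forall_mem_frontier_re_le {f : ℂ → ℂ} {U : Set ℂ}
    (hU : Bornology.IsBounded U) (hf : DiffContOnCl ℂ f U) {C : ℝ}
    (hC : ∀ z ∈ frontier U, (f z).re ≤ C) {z : ℂ} (hz : z ∈ closure U) : (f z).re ≤ C := by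
  have hexp := norm_le_of_forall_mem_frontier_norm_le hU
    (differentiable_exp.comp_diffContOnCl hf) (C := Real.exp C)
    (fun w hw => by simpa [norm_exp] using hC w hw) hz
  simpa [norm_exp] using hexp

theorem re_eq_zero_of_forall_mem_frontier_re_eq_zero {f : ℂ → ℂ} {U : Set ℂ}
    (hU : Bornology.IsBounded U) (hf : DiffContOnCl ℂ f U)
    (h : ∀ z ∈ frontier U, (f z).re = 0) {z : ℂ} (hz : z ∈ closure U) : (f z).re = 0 := by
  have hle := re_le_of_forall_mem_frontier_re_le hU hf (fun w hw => (h w hw).le) hz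
  have hge : (-f z).re ≤ 0 :=
    re_le_of_forall_mem_frontier_re_le hU hf.neg (fun w hw => by simp [h w hw]) hz
  rw [neg_re] at hge
  linarith

theorem _root_.HasDerivAt.re_eq_zero_of_eventually_re_eq {f : ℂ → ℂ} {d : ℂ} {x r : ℝ}
    (hf : HasDerivAt f d x) (hre : ∀ᶠ w in 𝓝 (x : ℂ), (f w).re = r) : d.re = 0 := by
  have hre' : (fun t : ℝ => (f t).re) =ᶠ[𝓝 x] fun _ => r :=
    continuous_ofReal.continuousAt.eventually hre
  exact (hf.real_of_complex.congr_of_eventuallyEq hre'.symm).unique (hasDerivAt_const x r)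

theorem _root_.HasDerivAt.eq_zero_of_eventually_re_eq {f : ℂ → ℂ} {d z : ℂ} {r : ℝ}
    (hf : HasDerivAt f d z) (hre : ∀ᶠ w in 𝓝 z, (f w).re = r) : d = 0 := by
  have hdir : ∀ u : ℂ, (d * u).re = 0 := fun u => by
    have hline : HasDerivAt (fun w : ℂ => z + u * w) u ((0 : ℝ) : ℂ) := by
      simpa using ((hasDerivAt_id (0 : ℂ)).const_mul u).const_add z
    have hf' : HasDerivAt f d ((fun w : ℂ => z + u * w) ((0 : ℝ) : ℂ)) := by simpa using hf
    have hcomp : HasDerivAt (fun w => f (z + u * w)) (d * u) ((0 : ℝ) : ℂ) :=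
      HasDerivAt.comp (h := fun w : ℂ => z + u * w) _ hf' hline
    exact HasDerivAt.re_eq_zero_of_eventually_re_eq (r := r) hcomp
      (hline.continuousAt.eventually (by simpa using hre))
  have h1 := hdir 1
  have hI := hdir I
  simp only [mul_one, mul_re, I_re, I_im, mul_zero, zero_sub, neg_eq_zero] at h1 hI
  exact ext h1 hI

theorem deriv_eq_zero_of_forall_mem_frontier_re_eq_zero {f : ℂ → ℂ} {U : Set ℂ}
    (hUo : IsOpen U) (hU : Bornology.IsBounded U) (hf : DiffContOnCl ℂ f U)
    (h : ∀ z ∈ frontier U, (f z).re = 0) {z : ℂ} (hz : z ∈ U) : deriv f z = 0 := by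
  have hre : ∀ᶠ w in 𝓝 z, (f w).re = 0 := by
    filter_upwards [hUo.mem_nhds hz] with w hw
    exact re_eq_zero_of_forall_mem_frontier_re_eq_zero hU hf h (subset_closure hw)
  exact (hf.differentiableAt hUo hz).hasDerivAt.eq_zero_of_eventually_re_eq hre

end Complex

section TrigPolynomial

variable (N : ℕ) (c : ℤ → ℂ)

def analyticPart (z : ℂ) : ℂ := c 0 + 2 * ∑ n ∈ Icc 1 N, c n * z ^ n

theorem differentiable_analyticPart : Differentiable ℂ (analyticPart N c) := by
  unfold analyticPart
  fun_prop

variable {N c}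

theorem hasDerivAt_analyticPart_zero (hc0 : ∀ e : ℤ, (N : ℤ) < |e| → c e = 0) :
    HasDerivAt (analyticPart N c) (2 * c 1) 0 := by
  have hsum : HasDerivAt (fun z : ℂ => ∑ n ∈ Icc 1 N, c n * z ^ n)
      (∑ n ∈ Icc 1 N, c n * (n * (0 : ℂ) ^ (n - 1))) 0 :=
    HasDerivAt.fun_sum fun n _ => (hasDerivAt_pow n 0).const_mul (c n)
  refine ((hsum.const_mul 2).const_add (c 0)).congr_deriv ?_
  rw [sum_eq_single 1]
  · simp
  · intro n hn hn1
    have : n - 1 ≠ 0 := by simp only [mem_Icc] at hn; omega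
    simp [zero_pow this]
  · intro h1
    have hc1 : c 1 = 0 :=
      hc0 1 (by simp only [mem_Icc, not_and_or] at h1; simp only [abs_one]; omega)
    simp [hc1]

theorem two_mul_sum_zpow_eq_analyticPart_add_conj (hsym : ∀ e : ℤ, c (-e) = conj (c e))
    {ζ : ℂ} (hζ : ‖ζ‖ = 1) :
    2 * ∑ e ∈ Icc (-(N : ℤ)) N, c e * ζ ^ e = analyticPart N c ζ + conj (analyticPart N c ζ) := by
  have hneg : ∀ n : ℕ, c (-n) * ζ ^ (-(n : ℤ)) = conj (c n * ζ ^ n) := fun n => by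
    rw [hsym, zpow_neg, zpow_natCast, ← inv_pow, Complex.inv_eq_conj hζ, map_mul, map_pow]
  have hc0 : conj (c 0) = c 0 := by simpa using (hsym 0).symm
  simp only [analyticPart, sum_Icc_neg_natCast, zpow_natCast, hneg, sum_add_distrib,
    map_add, map_mul, map_sum, map_ofNat, hc0, zpow_zero, mul_one]
  ring

end TrigPolynomial

/-- if `g` is continuous on the closed unit disc, holomorphic on the open unit
disc, and on the unit circle `g(ζ) + conj (g(ζ)) = 2 ∑_{e=-N}^{N} c_e ζ^e` with `c_e = 0`
for `|e| > N` and `c_{-e} = conj (c_e)`, then `g'(0) = 2 c_1`. -/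
theorem stmt11 (g : ℂ → ℂ)
    (hgc : ContinuousOn g {ζ : ℂ | ‖ζ‖ ≤ 1})
    (hgd : DifferentiableOn ℂ g {ζ : ℂ | ‖ζ‖ < 1})
    (N : ℕ) (c : ℤ → ℂ)
    (hc0 : ∀ e : ℤ, (N : ℤ) < |e| → c e = 0)
    (hsym : ∀ e : ℤ, c (-e) = conj (c e))
    (hbd : ∀ ζ : ℂ, ‖ζ‖ = 1 →
      g ζ + conj (g ζ) = 2 * ∑ e ∈ Finset.Icc (-(N : ℤ)) (N : ℤ), c e * ζ ^ e) :
    deriv g 0 = 2 * c 1 := by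
  have hball : {ζ : ℂ | ‖ζ‖ < 1} = Metric.ball 0 1 := (ball_zero_eq 1).symm
  have hclosure : {ζ : ℂ | ‖ζ‖ ≤ 1} = closure (Metric.ball 0 1) := by
    rw [closure_ball 0 one_ne_zero]; ext; simp
  have hdiff : DiffContOnCl ℂ (g - analyticPart N c) (Metric.ball 0 1) :=
    DiffContOnCl.sub ⟨hball ▸ hgd, hclosure ▸ hgc⟩ (differentiable_analyticPart N c).diffContOnCl
  have hre : ∀ ζ ∈ frontier (Metric.ball (0 : ℂ) 1), ((g - analyticPart N c) ζ).re = 0 := by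
    intro ζ hζ
    rw [frontier_ball 0 one_ne_zero, mem_sphere_zero_iff_norm] at hζ
    have hζbd := hbd ζ hζ
    rw [two_mul_sum_zpow_eq_analyticPart_add_conj hsym hζ, Complex.add_conj, Complex.add_conj,
      Complex.ofReal_inj] at hζbd
    simp only [Pi.sub_apply, Complex.sub_re]
    linarith
  have hzero := Complex.deriv_eq_zero_of_forall_mem_frontier_re_eq_zero Metric.isOpen_ball
    Metric.isBounded_ball hdiff hre (Metric.mem_ball_self one_pos)
  have hg : HasDerivAt g (deriv g 0) 0 :=
    (hgd.differentiableAt (hball ▸ Metric.ball_mem_nhds 0 one_pos)).hasDerivAt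
  rw [(hg.sub (hasDerivAt_analyticPart_zero hc0)).deriv, sub_eq_zero] at hzero
  exact hzero
end

section
/- Assume m_i + m_j ≤ d for all indices i, j, and fix v ∈ ℂ^n. Then for every ζ ∈ ℂ with |ζ| = 1, the determinant of the n × n matrix whose (i,j) entry is P_{z_i w_j}(h^v(ζ), \overline{h^v(ζ)}) equals (1 − ζ)^{nd − 2(m_1 + ⋯ + m_n)} times the determinant of the n × n matrix whose (i,j) entry is P_{z_i w_j}(v, (−ζ^{−1})^M \overline{v}). -/
/-!
With the weights `(m, m)` on `(z, w)`, `P` is weighted homogeneous of degree `d`, so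
`P_{z_i w_j}` is weighted homogeneous of degree `d - m_i - m_j`. On the unit circle
`1 - conj ζ = (1 - ζ)(-ζ⁻¹)`, so the point `(h^v(ζ), conj h^v(ζ))` is the weighted scaling of
`(v, (-ζ⁻¹)^M conj v)` by `1 - ζ`, and the `(i, j)` entry of the Levi matrix picks up the factor
`(1 - ζ)^(d - m_i - m_j)`. In each term of the Leibniz expansion these exponents add up to
`n d - 2 ∑ m_i`.
-/

open MvPolynomial ComplexConjugate

namespace MvPolynomial

theorem IsWeightedHomogeneous.eval_pow_weight_mul_s13 {R σ : Type*} [CommSemiring R] {w : σ → ℕ}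
    {φ : MvPolynomial σ R} {e : ℕ} (hφ : φ.IsWeightedHomogeneous w e) (c : R) (x : σ → R) :
    eval (fun i => c ^ w i * x i) φ = c ^ e * eval x φ := by
  rw [eval_eq, eval_eq, Finset.mul_sum]
  refine Finset.sum_congr rfl fun J hJ => ?_
  have hwJ : ∑ i ∈ J.support, w i * J i = e := by
    rw [← hφ (mem_support_iff.mp hJ), Finsupp.weight_apply, Finsupp.sum]
    simp only [smul_eq_mul, mul_comm]
  simp only [mul_pow, ← pow_mul, Finset.prod_mul_distrib, Finset.prod_pow_eq_pow_sum, hwJ]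
  ring

end MvPolynomial

theorem Matrix.det_of_pow_sub_add_mul {ι R : Type*} [Fintype ι] [DecidableEq ι] [CommRing R]
    (a : ι → ℕ) (e : ℕ) (hae : ∀ i j, a i + a j ≤ e) (c : R) (B : ι → ι → R) :
    (Matrix.of fun i j => c ^ (e - (a i + a j)) * B i j).det
      = c ^ (Fintype.card ι * e - 2 * ∑ i, a i) * (Matrix.of B).det := by
  rw [Matrix.det_apply, Matrix.det_apply, Finset.mul_sum]
  refine Finset.sum_congr rfl fun σ _ => ?_
  have hexp : ∑ i, (e - (a (σ i) + a i)) = Fintype.card ι * e - 2 * ∑ i, a i := by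
    have hsplit : ∑ i, (e - (a (σ i) + a i)) + ∑ i, (a (σ i) + a i) = Fintype.card ι * e := by
      rw [← Finset.sum_add_distrib, Finset.sum_congr rfl fun i _ => Nat.sub_add_cancel (hae _ _)]
      simp
    have hperm : ∑ i, (a (σ i) + a i) = 2 * ∑ i, a i := by
      rw [Finset.sum_add_distrib, Equiv.sum_comp σ a]; ring
    omega
  simp only [Matrix.of_apply, Finset.prod_mul_distrib, Finset.prod_pow_eq_pow_sum, hexp,
    mul_smul_comm]

theorem Complex.one_sub_conj_eq_mul_neg_inv {ζ : ℂ} (hζ : ‖ζ‖ = 1) :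
    1 - conj ζ = (1 - ζ) * -ζ⁻¹ := by
  have hζ0 : ζ ≠ 0 := by rintro rfl; simp at hζ
  rw [← Complex.inv_eq_conj hζ]
  field_simp
  ring

theorem stmt13_general (n : ℕ) (m : Fin n → ℕ)
    (d k0 : ℕ)
    (P : MvPolynomial (Fin n ⊕ Fin n) ℂ)
    (hP : ∀ J ∈ P.support,
      ((∑ i, m i * J (Sum.inl i)) + (∑ i, m i * J (Sum.inr i)) = d ∧
        d - k0 ≤ ∑ i, m i * J (Sum.inr i) ∧ (∑ i, m i * J (Sum.inr i)) ≤ k0))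
    (hmd : ∀ i j : Fin n, m i + m j ≤ d) (v : Fin n → ℂ)
    (ζ : ℂ) (hζ : ‖ζ‖ = 1) :
    (Matrix.of fun i j : Fin n =>
        eval (Sum.elim (fun l => (1 - ζ) ^ m l * v l)
            (fun l => (1 - conj ζ) ^ m l * conj (v l)))
          (pderiv (Sum.inl i) (pderiv (Sum.inr j) P))).det
      = (1 - ζ) ^ (n * d - 2 * ∑ i, m i) *
          (Matrix.of fun i j : Fin n =>
            eval (Sum.elim v (fun l => (-ζ⁻¹) ^ m l * conj (v l)))
              (pderiv (Sum.inl i) (pderiv (Sum.inr j) P))).det := by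
  have hhom : P.IsWeightedHomogeneous (Sum.elim m m) d := fun J hJ => by
    rw [Finsupp.weight_apply, Finsupp.sum_fintype _ _ (by simp), Fintype.sum_sum_type]
    simpa only [Sum.elim_inl, Sum.elim_inr, smul_eq_mul, mul_comm]
      using (hP J (mem_support_iff.mpr hJ)).1
  have hpoint : Sum.elim (fun l => (1 - ζ) ^ m l * v l) (fun l => (1 - conj ζ) ^ m l * conj (v l))
      = fun s => (1 - ζ) ^ Sum.elim m m s * Sum.elim v (fun l => (-ζ⁻¹) ^ m l * conj (v l)) s := by
    funext l
    rcases l with l | l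
    · rfl
    · simp only [Sum.elim_inr, Complex.one_sub_conj_eq_mul_neg_inv hζ, mul_pow, mul_assoc]
  have hentry : ∀ i j, eval (Sum.elim (fun l => (1 - ζ) ^ m l * v l)
        (fun l => (1 - conj ζ) ^ m l * conj (v l))) (pderiv (Sum.inl i) (pderiv (Sum.inr j) P))
      = (1 - ζ) ^ (d - (m i + m j)) * eval (Sum.elim v (fun l => (-ζ⁻¹) ^ m l * conj (v l)))
        (pderiv (Sum.inl i) (pderiv (Sum.inr j) P)) := by
    intro i j
    have hmij := hmd i j
    have hj := hhom.pderiv (n' := d - m j) (i := Sum.inr j) (by simp only [Sum.elim_inr]; omega)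
    have hij := hj.pderiv (n' := d - (m i + m j)) (i := Sum.inl i)
      (by simp only [Sum.elim_inl]; omega)
    rw [hpoint, hij.eval_pow_weight_mul_s13]
  simp only [hentry]
  rw [Matrix.det_of_pow_sub_add_mul m d hmd, Fintype.card_fin]

/-- assuming `m i + m j ≤ d` for all `i, j`, for every `ζ` on the unit circle
the Levi determinant `det (P_{z_i w_j}(h^v(ζ), conj (h^v(ζ))))` equals
`(1-ζ)^(nd - 2(m_1 + ⋯ + m_n))` times `det (P_{z_i w_j}(v, (-ζ⁻¹)^M conj v))`. -/
theorem stmt13 (n : ℕ) (hn : 1 ≤ n) (m : Fin n → ℕ) (hm : ∀ i, 0 < m i)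
    (d k0 : ℕ) (hdk0 : d ≤ 2 * k0) (hk0d : k0 < d)
    (P : MvPolynomial (Fin n ⊕ Fin n) ℂ)
    (hP : ∀ J ∈ P.support,
      ((∑ i, m i * J (Sum.inl i)) + (∑ i, m i * J (Sum.inr i)) = d ∧
        d - k0 ≤ ∑ i, m i * J (Sum.inr i) ∧ (∑ i, m i * J (Sum.inr i)) ≤ k0))
    (hmd : ∀ i j : Fin n, m i + m j ≤ d) (v : Fin n → ℂ)
    (ζ : ℂ) (hζ : ‖ζ‖ = 1) :
    (Matrix.of fun i j : Fin n =>
        eval (Sum.elim (fun l => (1 - ζ) ^ m l * v l)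
            (fun l => (1 - conj ζ) ^ m l * conj (v l)))
          (pderiv (Sum.inl i) (pderiv (Sum.inr j) P))).det
      = (1 - ζ) ^ (n * d - 2 * ∑ i, m i) *
          (Matrix.of fun i j : Fin n =>
            eval (Sum.elim v (fun l => (-ζ⁻¹) ^ m l * conj (v l)))
              (pderiv (Sum.inl i) (pderiv (Sum.inr j) P))).det :=
  stmt13_general n m d k0 P hP hmd v ζ hζ
end

section
/- Write P = Σ_{j = d−k_0}^{k_0} P_j, where every monomial z^J w^K occurring in P_j satisfies M·J = j and M·K = d − j. Fix v ∈ ℂ^n, and let g : ℂ → ℂ be continuous on the closed unit disc, holomorphic on the open unit disc, and satisfy g(ζ) + \overline{g(ζ)} = 2 · P(h^v(ζ), \overline{h^v(ζ)}) for every ζ ∈ ℂ with |ζ| = 1. Then g′(0) = −2 · Σ_{j = d−k_0}^{k_0} (Σ_{ℓ ≥ 0} C(j, ℓ + 1) · C(d − j, ℓ)) · P_j(v, \overline{v}), where C(·,·) denotes the binomial coefficient and \overline{v} = (\overline{v_1},…,\overline{v_n}). -/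
/-!
Cauchy's formula gives `g'(0) = (2πi)⁻¹ ∮ g(z) / z² dz` over the unit circle, and adding
`∮ conj (g z) / z² dz` changes nothing, because on the circle this is a multiple of
`conj (∮ g(z) dz) = 0`. So `g'(0)` only depends on the boundary values of `g + conj g`. By weighted
homogeneity, `P_j(h^v(ζ), conj (h^v(ζ))) = (1 - ζ)^j (1 - conj ζ)^(d-j) P_j(v, conj v)`, and since
`conj ζ = ζ⁻¹` on the circle, this is a Laurent polynomial in `ζ`; the integral against `ζ⁻²`
picks out its coefficient of `ζ`, namely `-∑_l C(j, l+1) C(d-j, l)`.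
-/

open MvPolynomial ComplexConjugate Finset
open Complex Metric Real

theorem circleIntegral.integral_conj_div_sub_sq (f : ℂ → ℂ) (c : ℂ) (R : ℝ) :
    ∮ z in C(c, R), conj (f z) / (z - c) ^ 2 = -(R ^ 2 : ℂ)⁻¹ * conj (∮ z in C(c, R), f z) := by
  simp only [circleIntegral, deriv_circleMap, circleMap_sub_center, smul_eq_mul]
  rw [← intervalIntegral.intervalIntegral_conj, ← intervalIntegral.integral_const_mul]
  refine intervalIntegral.integral_congr fun θ _ => ?_
  have hinv : (circleMap 0 R θ)⁻¹ = conj (circleMap 0 R θ) / (R ^ 2 : ℂ) := by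
    rw [inv_def, normSq_eq_norm_sq, norm_circleMap_zero, sq_abs, div_eq_mul_inv]; push_cast; ring
  calc circleMap 0 R θ * I * (conj (f (circleMap c R θ)) / circleMap 0 R θ ^ 2)
      = I * conj (f (circleMap c R θ)) *
          (circleMap 0 R θ / (circleMap 0 R θ * circleMap 0 R θ)) := by ring
    _ = _ := by rw [div_self_mul_self', hinv]; simp only [map_mul, conj_I]; ring

theorem DiffContOnCl.deriv_eq_circleIntegral_add_conj {f : ℂ → ℂ} {c : ℂ} {R : ℝ} (hR : 0 < R)
    (hf : DiffContOnCl ℂ f (ball c R)) :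
    deriv f c = (2 * π * I)⁻¹ * ∮ z in C(c, R), (f z + conj (f z)) / (z - c) ^ 2 := by
  have hsphere : ContinuousOn f (sphere c R) :=
    hf.continuousOn_ball.mono sphere_subset_closedBall
  have hden : ∀ z ∈ sphere c R, (z - c) ^ 2 ≠ 0 := fun z hz =>
    pow_ne_zero _ (sub_ne_zero.2 (ne_of_mem_sphere hz hR.ne'))
  have hint : CircleIntegrable (fun z => f z / (z - c) ^ 2) c R :=
    (hsphere.div (by fun_prop) hden).circleIntegrable hR.le
  have hint_conj : CircleIntegrable (fun z => conj (f z) / (z - c) ^ 2) c R :=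
    ((continuous_conj.comp_continuousOn hsphere).div (by fun_prop) hden).circleIntegrable hR.le
  have hcauchy : ∮ z in C(c, R), f z / (z - c) ^ 2 = 2 * π * I * deriv f c := by
    simpa only [smul_eq_mul, one_div_mul_eq_div] using hf.deriv_eq_smul_circleIntegral hR
  simp only [add_div]
  rw [circleIntegral.integral_add hint hint_conj, hcauchy, circleIntegral.integral_conj_div_sub_sq,
    hf.circleIntegral_eq_zero hR.le, map_zero, mul_zero, add_zero,
    inv_mul_cancel_left₀ two_pi_I_ne_zero]

theorem circleIntegral.integral_sub_zpow_of_mem_ball {c w : ℂ} {R : ℝ} (hw : w ∈ ball c R)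
    (n : ℤ) :
    ∮ z in C(c, R), (z - w) ^ n = if n = -1 then 2 * π * I else 0 := by
  split_ifs with hn
  · rw [hn]
    simpa only [zpow_neg_one] using circleIntegral.integral_sub_inv_of_mem_ball hw
  · exact circleIntegral.integral_sub_zpow_of_ne hn c w R

open Polynomial in
theorem Polynomial.coeff_one_sub_X_pow {R : Type*} [CommRing R] (n k : ℕ) :
    ((1 - X : R[X]) ^ n).coeff k = (-1) ^ k * n.choose k := by
  rw [show (1 - X : R[X]) = C (-1) * X + 1 by simp [sub_eq_neg_add], add_pow, finsetSum_coeff]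
  simp only [one_pow, mul_one, coeff_mul_natCast, mul_pow, ← C_pow, coeff_C_mul_X_pow, ite_mul,
    zero_mul, sum_ite_eq, mem_range, ite_eq_left_iff, not_lt]
  intro hk
  rw [Nat.choose_eq_zero_of_lt (by omega), Nat.cast_zero, mul_zero]

/- On the unit circle `conj z = z⁻¹`, so the integrand is a Laurent polynomial and only its
`z⁻¹` term, coming from the products `p_(l+1) z^(l+1) * q_l z^(-l)`, survives. -/
open Polynomial in
theorem circleIntegral.integral_eval_mul_eval_conj_div_sq (p q : ℂ[X]) {N : ℕ}
    (hN : q.natDegree < N) :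
    ∮ z in C(0, 1), p.eval z * q.eval (conj z) / z ^ 2
      = 2 * π * I * ∑ l ∈ range N, p.coeff (l + 1) * q.coeff l := by
  set A := p.natDegree + N + 1
  have hlaurent : Set.EqOn (fun z => p.eval z * q.eval (conj z) / z ^ 2)
      (fun z => ∑ a ∈ range A, ∑ l ∈ range N, p.coeff a * q.coeff l * z ^ ((a : ℤ) - l - 2))
      (sphere 0 1) := by
    intro z hz
    have hz0 : z ≠ 0 := ne_of_mem_sphere hz one_ne_zero
    dsimp only
    rw [← inv_eq_conj (mem_sphere_zero_iff_norm.1 hz),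
      eval_eq_sum_range' (by omega : p.natDegree < A), eval_eq_sum_range' hN, sum_mul_sum, sum_div]
    refine sum_congr rfl fun a _ => (sum_div _ _ _).trans (sum_congr rfl fun l _ => ?_)
    rw [zpow_sub₀ hz0, zpow_sub₀ hz0, zpow_natCast, zpow_natCast, inv_pow]
    field_simp
  have hcont : ∀ a l : ℕ, ContinuousOn (fun z : ℂ => z ^ ((a : ℤ) - l - 2)) (sphere 0 1) :=
    fun a l => continuousOn_id.zpow₀ _ fun z hz => Or.inl (ne_of_mem_sphere hz one_ne_zero)
  have hterm : ∀ (a l : ℕ) (b : ℂ), CircleIntegrable (fun z => b * z ^ ((a : ℤ) - l - 2)) 0 1 :=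
    fun a l b => (continuousOn_const.mul (hcont a l)).circleIntegrable zero_le_one
  have hrow : ∀ a : ℕ, CircleIntegrable
      (fun z => ∑ l ∈ range N, p.coeff a * q.coeff l * z ^ ((a : ℤ) - l - 2)) 0 1 :=
    fun a => ContinuousOn.circleIntegrable zero_le_one <|
      continuousOn_finsetSum _ fun l _ => continuousOn_const.mul (hcont a l)
  have hmonomial : ∀ a l : ℕ, ∮ z in C(0, 1), z ^ ((a : ℤ) - l - 2)
      = if a = l + 1 then 2 * π * I else 0 := by
    intro a l
    simpa only [sub_zero, show (a : ℤ) - l - 2 = -1 ↔ a = l + 1 by omega] using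
      circleIntegral.integral_sub_zpow_of_mem_ball (c := 0) (w := 0) (mem_ball_self one_pos)
        ((a : ℤ) - l - 2)
  rw [circleIntegral.integral_congr zero_le_one hlaurent,
    circleIntegral.integral_fun_sum fun a _ => hrow a]
  simp only [circleIntegral.integral_fun_sum fun l _ => hterm _ l _,
    circleIntegral.integral_const_mul, hmonomial, mul_ite, mul_zero]
  rw [sum_comm, mul_sum]
  refine sum_congr rfl fun l hl => ?_
  rw [sum_ite_eq' (range A), if_pos (mem_range.2 (by simp at hl; omega))]
  ring

theorem circleIntegral.integral_one_sub_pow_mul_one_sub_conj_pow_div_sq (j e : ℕ) {N : ℕ}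
    (hN : e < N) :
    ∮ z in C(0, 1), (1 - z) ^ j * (1 - conj z) ^ e / z ^ 2
      = -(2 * π * I) * ((∑ l ∈ range N, j.choose (l + 1) * e.choose l : ℕ) : ℂ) := by
  have hdeg : ((1 - Polynomial.X : Polynomial ℂ) ^ e).natDegree < N :=
    lt_of_le_of_lt (by compute_degree!) hN
  have h := circleIntegral.integral_eval_mul_eval_conj_div_sq ((1 - Polynomial.X) ^ j) _ hdeg
  simp only [Polynomial.eval_pow, Polynomial.eval_sub, Polynomial.eval_one, Polynomial.eval_X,
    Polynomial.coeff_one_sub_X_pow] at h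
  rw [h, neg_mul, ← mul_neg, Nat.cast_sum, ← sum_neg_distrib]
  refine congrArg _ (sum_congr rfl fun l _ => ?_)
  have hsign : (-1 : ℂ) ^ (l + 1) * (-1) ^ l = -1 := by
    rw [pow_succ, mul_right_comm, ← mul_pow, neg_one_mul, neg_neg, one_pow, one_mul]
  push_cast
  linear_combination (j.choose (l + 1) * e.choose l : ℂ) * hsign

theorem MvPolynomial.eval_sumElim_pow_mul {R ι : Type*} [CommSemiring R] [Fintype ι]
    (m : ι → ℕ) {Q : MvPolynomial (ι ⊕ ι) R} {a b : ℕ}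
    (hQ : ∀ J ∈ Q.support, (∑ i, m i * J (Sum.inl i)) = a ∧ (∑ i, m i * J (Sum.inr i)) = b)
    (x y : ι → R) (s t : R) :
    eval (Sum.elim (fun i => s ^ m i * x i) (fun i => t ^ m i * y i)) Q
      = s ^ a * t ^ b * eval (Sum.elim x y) Q := by
  rw [eval_eq', eval_eq', mul_sum]
  refine sum_congr rfl fun J hJ => ?_
  obtain ⟨ha, hb⟩ := hQ J hJ
  simp only [Fintype.prod_sum_type, Sum.elim_inl, Sum.elim_inr, mul_pow, prod_mul_distrib,
    ← pow_mul, prod_pow_eq_pow_sum, ha, hb]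
  ring

theorem stmt16_general (n : ℕ) (m : Fin n → ℕ)
    (d k0 : ℕ)
    (P : MvPolynomial (Fin n ⊕ Fin n) ℂ)
    (Pc : ℕ → MvPolynomial (Fin n ⊕ Fin n) ℂ)
    (hdecomp : P = ∑ j ∈ Finset.Icc (d - k0) k0, Pc j)
    (hPc : ∀ j ∈ Finset.Icc (d - k0) k0, ∀ J ∈ (Pc j).support,
      (∑ i, m i * J (Sum.inl i)) = j ∧ (∑ i, m i * J (Sum.inr i)) = d - j)
    (v : Fin n → ℂ) (g : ℂ → ℂ)
    (hgc : ContinuousOn g {ζ : ℂ | ‖ζ‖ ≤ 1})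
    (hgd : DifferentiableOn ℂ g {ζ : ℂ | ‖ζ‖ < 1})
    (hbd : ∀ ζ : ℂ, ‖ζ‖ = 1 →
      g ζ + conj (g ζ)
        = 2 * eval (Sum.elim (fun l => (1 - ζ) ^ m l * v l)
            (fun l => (1 - conj ζ) ^ m l * conj (v l))) P) :
    deriv g 0 = -2 * ∑ j ∈ Finset.Icc (d - k0) k0,
      ((∑ l ∈ Finset.range (d + 1), j.choose (l + 1) * (d - j).choose l : ℕ) : ℂ) *
        eval (Sum.elim v (fun l => conj (v l))) (Pc j) := by
  set c : ℕ → ℂ := fun j => eval (Sum.elim v fun l => conj (v l)) (Pc j)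
  have hg : DiffContOnCl ℂ g (ball 0 1) := by
    refine ⟨by simpa [ball, Complex.dist_eq] using hgd, ?_⟩
    rw [closure_ball 0 one_ne_zero]
    simpa [closedBall, Complex.dist_eq] using hgc
  have hboundary : Set.EqOn (fun z => (g z + conj (g z)) / (z - 0) ^ 2)
      (fun z => ∑ j ∈ Icc (d - k0) k0, 2 * c j * ((1 - z) ^ j * (1 - conj z) ^ (d - j) / z ^ 2))
      (sphere 0 1) := by
    intro z hz
    simp only [hbd z (mem_sphere_zero_iff_norm.1 hz), hdecomp, map_sum, mul_sum, sum_div]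
    refine sum_congr rfl fun j hj => ?_
    rw [eval_sumElim_pow_mul m (hPc j hj)]
    ring
  have hint : ∀ j, CircleIntegrable
      (fun z => 2 * c j * ((1 - z) ^ j * (1 - conj z) ^ (d - j) / z ^ 2)) 0 1 :=
    fun j => (continuousOn_const.mul (ContinuousOn.div (by fun_prop) (by fun_prop)
      fun z hz => pow_ne_zero 2 (ne_of_mem_sphere hz one_ne_zero))).circleIntegrable zero_le_one
  rw [hg.deriv_eq_circleIntegral_add_conj one_pos,
    circleIntegral.integral_congr zero_le_one hboundary,
    circleIntegral.integral_fun_sum fun j _ => hint j]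
  simp only [circleIntegral.integral_const_mul, mul_sum,
    circleIntegral.integral_one_sub_pow_mul_one_sub_conj_pow_div_sq _ _
      (Nat.lt_add_one_of_le (Nat.sub_le d _))]
  refine sum_congr rfl fun j _ => ?_
  field_simp [two_pi_I_ne_zero]
  ring

/-- writing `P = ∑_{j=d-k₀}^{k₀} P_j` with `P_j` bihomogeneous of bidegree
`(j, d-j)`, if `g` is continuous on the closed unit disc, holomorphic on the open unit disc,
and `g(ζ) + conj (g(ζ)) = 2 P(h^v(ζ), conj (h^v(ζ)))` on the unit circle, then
`g'(0) = -2 ∑_{j=d-k₀}^{k₀} (∑_{ℓ≥0} C(j, ℓ+1) C(d-j, ℓ)) P_j(v, conj v)`. -/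
theorem stmt16 (n : ℕ) (hn : 1 ≤ n) (m : Fin n → ℕ) (hm : ∀ i, 0 < m i)
    (d k0 : ℕ) (hdk0 : d ≤ 2 * k0) (hk0d : k0 < d)
    (P : MvPolynomial (Fin n ⊕ Fin n) ℂ)
    (Pc : ℕ → MvPolynomial (Fin n ⊕ Fin n) ℂ)
    (hdecomp : P = ∑ j ∈ Finset.Icc (d - k0) k0, Pc j)
    (hPc : ∀ j ∈ Finset.Icc (d - k0) k0, ∀ J ∈ (Pc j).support,
      (∑ i, m i * J (Sum.inl i)) = j ∧ (∑ i, m i * J (Sum.inr i)) = d - j)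
    (v : Fin n → ℂ) (g : ℂ → ℂ)
    (hgc : ContinuousOn g {ζ : ℂ | ‖ζ‖ ≤ 1})
    (hgd : DifferentiableOn ℂ g {ζ : ℂ | ‖ζ‖ < 1})
    (hbd : ∀ ζ : ℂ, ‖ζ‖ = 1 →
      g ζ + conj (g ζ)
        = 2 * eval (Sum.elim (fun l => (1 - ζ) ^ m l * v l)
            (fun l => (1 - conj ζ) ^ m l * conj (v l))) P) :
    deriv g 0 = -2 * ∑ j ∈ Finset.Icc (d - k0) k0,
      ((∑ l ∈ Finset.range (d + 1), j.choose (l + 1) * (d - j).choose l : ℕ) : ℂ) *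
        eval (Sum.elim v (fun l => conj (v l))) (Pc j) :=
  stmt16_general n m d k0 P Pc hdecomp hPc v g hgc hgd hbd
end
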